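/- Let p, q ∈ (0,1), φ ∈ [0,2π), with either p ≠ q or (p = q and φ ∉ {0,π}). Set μ₁ = √(pq), μ₂ = √((1−p)(1−q)), λ_max = √(μ₁² + μ₂² + 2μ₁μ₂|cos φ|), and for each n define α_n = ((1+(2p−1)^n)/2) a_n² + ((1−(2p−1)^n)/2) b_n², where a_n = |(μ₁ + e^{−iφ}μ₂)^n + (μ₁ − e^{−iφ}μ₂)^n| / √((1+(2p−1)^n)(1+(2q−1)^n)) and b_n = |(μ₁ + e^{−iφ}μ₂)^n − (μ₁ − e^{−iφ}μ₂)^n| / √((1−(2p−1)^n)(1−(2q−1)^n)). For ε ∈ (0,1) let n_ε be the least integer n with α_m ≤ ε for all m ≥ n. Then n_ε / log_{λ_max²}(ε) → 1 as ε → 0, i.e., n_ε = log_{λ_max²}(ε) + o(log_{λ_max²}(ε)). -/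

import Mathlib

/-!
With `z± = μ₁ ± e^{-iφ} μ₂` one has `λ_max² = max (|z₊|², |z₋|²)`. The numerators of `a_n` and
`b_n` are `|z₊ⁿ ± z₋ⁿ|`, so by the parallelogram law their squares add up to
`2 (|z₊|²ⁿ + |z₋|²ⁿ)`, which lies between `λ_max²ⁿ` and `2 λ_max²ⁿ`. The weights `1 ± (2p-1)ⁿ`
cancel in `α_n`, and `1 ± (2q-1)ⁿ` stay between `1 - |2q-1|` and `2`, so `α_n` is squeezed
between two constant multiples of `λ_max²ⁿ`. The hypothesis on `(p, q, φ)` is exactly what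
makes `λ_max² < 1`, and for any sequence squeezed between multiples of `Kⁿ` with `0 < K < 1`
the critical index is `log_K ε + O(1)`.
-/

open Filter

noncomputable section

/-- a_n = |(μ₁+e^{−iφ}μ₂)^n + (μ₁−e^{−iφ}μ₂)^n| / √((1+Δp^n)(1+Δq^n)), the modulus of
the overlap ⟨0_q|0_p⟩ of the normalized even-parity components. -/
def aSeq (p q φ : ℝ) (n : ℕ) : ℝ :=
  ‖(((Real.sqrt (p * q) : ℂ) +
      Complex.exp (-(Complex.I * φ)) * (Real.sqrt ((1 - p) * (1 - q)) : ℂ)) ^ n +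
    ((Real.sqrt (p * q) : ℂ) -
      Complex.exp (-(Complex.I * φ)) * (Real.sqrt ((1 - p) * (1 - q)) : ℂ)) ^ n)‖ /
  Real.sqrt ((1 + (2 * p - 1) ^ n) * (1 + (2 * q - 1) ^ n))

/-- b_n = |(μ₁+e^{−iφ}μ₂)^n − (μ₁−e^{−iφ}μ₂)^n| / √((1−Δp^n)(1−Δq^n)), the modulus of
the overlap ⟨1_q|1_p⟩ of the normalized odd-parity components. -/
def bSeq (p q φ : ℝ) (n : ℕ) : ℝ :=
  ‖(((Real.sqrt (p * q) : ℂ) +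
      Complex.exp (-(Complex.I * φ)) * (Real.sqrt ((1 - p) * (1 - q)) : ℂ)) ^ n -
    ((Real.sqrt (p * q) : ℂ) -
      Complex.exp (-(Complex.I * φ)) * (Real.sqrt ((1 - p) * (1 - q)) : ℂ)) ^ n)‖ /
  Real.sqrt ((1 - (2 * p - 1) ^ n) * (1 - (2 * q - 1) ^ n))

/-- α_n = ((1+Δp^n)/2) a_n² + ((1−Δp^n)/2) b_n²: the type-I error probability of the
optimal ℤ₂-invariant binary POVM (whose type-II error probability is 0) for testing
n copies of √p|0⟩+√(1-p)|1⟩ against √q|0⟩+e^{iφ}√(1-q)|1⟩. -/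
def typeIError (p q φ : ℝ) (n : ℕ) : ℝ :=
  (1 + (2 * p - 1) ^ n) / 2 * aSeq p q φ n ^ 2 + (1 - (2 * p - 1) ^ n) / 2 * bSeq p q φ n ^ 2

/-- λ_max = √(μ₁² + μ₂² + 2μ₁μ₂|cos φ|), μ₁ = √(pq), μ₂ = √((1−p)(1−q)). -/
def lamMax (p q φ : ℝ) : ℝ :=
  Real.sqrt (Real.sqrt (p * q) ^ 2 + Real.sqrt ((1 - p) * (1 - q)) ^ 2 +
    2 * Real.sqrt (p * q) * Real.sqrt ((1 - p) * (1 - q)) * |Real.cos φ|)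

/-- n_ε: the least n such that α_m ≤ ε for all m ≥ n. -/
def nCrit (p q φ ε : ℝ) : ℕ := sInf {n : ℕ | ∀ m : ℕ, n ≤ m → typeIError p q φ m ≤ ε}

open Asymptotics Real Topology Set

lemma tendsto_div_nhds_one_of_isBigO_sub {α : Type*} {l : Filter α} {f g : α → ℝ}
    (hg : Tendsto g l atTop) (hfg : (f - g) =O[l] fun _ ↦ (1 : ℝ)) :
    Tendsto (f / g) l (𝓝 1) :=
  (isEquivalent_iff_tendsto_one (hg.eventually_ne_atTop 0)).mp <|
    hfg.trans_isLittleO <| (isLittleO_one_left_iff ℝ).mpr <| tendsto_norm_atTop_atTop.comp hg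

def criticalIndex (u : ℕ → ℝ) (ε : ℝ) : ℕ := sInf {n | ∀ m, n ≤ m → u m ≤ ε}

section GeometricSandwich

variable {u : ℕ → ℝ} {K c C ε : ℝ} (hK₀ : 0 < K) (hK₁ : K < 1)
include hK₀ hK₁

lemma le_of_logb_div_le (hup : ∀ n, u n ≤ C * K ^ n) (hC : 0 < C) (hε : 0 < ε) {m : ℕ}
    (hm : logb K (ε / C) ≤ m) : u m ≤ ε := by
  rw [logb_le_iff_le_rpow_of_base_lt_one hK₀ hK₁ (by positivity), rpow_natCast,
    le_div_iff₀' hC] at hm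
  exact (hup m).trans hm

lemma criticalIndex_le_ceil_logb_div (hup : ∀ n, u n ≤ C * K ^ n) (hC : 0 < C) (hε : 0 < ε) :
    criticalIndex u ε ≤ ⌈logb K (ε / C)⌉₊ :=
  Nat.sInf_le fun m hm ↦ le_of_logb_div_le hK₀ hK₁ hup hC hε <|
    (Nat.le_ceil _).trans (by exact_mod_cast hm)

lemma logb_div_le_criticalIndex (hlow : ∀ n, c * K ^ n ≤ u n) (hup : ∀ n, u n ≤ C * K ^ n)
    (hc : 0 < c) (hC : 0 < C) (hε : 0 < ε) : logb K (ε / c) ≤ criticalIndex u ε := by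
  have hmem : u (criticalIndex u ε) ≤ ε :=
    Nat.sInf_mem (s := {n | ∀ m, n ≤ m → u m ≤ ε})
      ⟨_, fun m hm ↦ le_of_logb_div_le hK₀ hK₁ hup hC hε <|
        (Nat.le_ceil _).trans (by exact_mod_cast hm)⟩ _ le_rfl
  rw [logb_le_iff_le_rpow_of_base_lt_one hK₀ hK₁ (by positivity), rpow_natCast,
    le_div_iff₀' hc]
  exact (hlow _).trans hmem

lemma tendsto_criticalIndex_div_logb (hlow : ∀ n, c * K ^ n ≤ u n)
    (hup : ∀ n, u n ≤ C * K ^ n) (hc : 0 < c) (hC : 0 < C) :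
    Tendsto (fun ε ↦ (criticalIndex u ε : ℝ) / logb K ε) (𝓝[>] 0) (𝓝 1) := by
  refine tendsto_div_nhds_one_of_isBigO_sub (tendsto_logb_nhdsGT_zero_of_base_lt_one hK₀ hK₁)
    (.of_bound (|logb K c| + |logb K C| + 1) ?_)
  filter_upwards [Ioo_mem_nhdsGT hC] with ε ⟨hε, hεC⟩
  have hceil : (⌈logb K (ε / C)⌉₊ : ℝ) < logb K (ε / C) + 1 :=
    Nat.ceil_lt_add_one <| logb_nonneg_of_base_lt_one hK₀ hK₁ (by positivity)
      (div_le_one_of_le₀ hεC.le hC.le)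
  have hupper :=
    (Nat.cast_le.mpr (criticalIndex_le_ceil_logb_div hK₀ hK₁ hup hC hε)).trans_lt hceil
  have hlower := logb_div_le_criticalIndex hK₀ hK₁ hlow hup hc hC hε
  rw [logb_div hε.ne' hC.ne'] at hupper
  rw [logb_div hε.ne' hc.ne'] at hlower
  rw [Pi.sub_apply, norm_one, mul_one, Real.norm_eq_abs, abs_le]
  constructor <;> linarith [le_abs_self (logb K c), neg_abs_le (logb K C), abs_nonneg (logb K c),
    abs_nonneg (logb K C)]

end GeometricSandwich

lemma pow_max_le_add_pow {R : Type*} [CommSemiring R] [LinearOrder R] [IsOrderedRing R]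
    {a b : R} (ha : 0 ≤ a) (hb : 0 ≤ b) (n : ℕ) : max a b ^ n ≤ a ^ n + b ^ n := by
  rcases max_choice a b with h | h
  · rw [h]; exact le_add_of_nonneg_right (pow_nonneg hb n)
  · rw [h]; exact le_add_of_nonneg_left (pow_nonneg ha n)

lemma add_pow_le_two_mul_pow_max {R : Type*} [CommSemiring R] [LinearOrder R] [IsOrderedRing R]
    {a b : R} (ha : 0 ≤ a) (hb : 0 ≤ b) (n : ℕ) : a ^ n + b ^ n ≤ 2 * max a b ^ n := by
  rw [two_mul]
  gcongr
  exacts [le_max_left a b, le_max_right a b]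

lemma half_mul_sq_div_sqrt_mul {a b : ℝ} (ha : 0 < a) (hb : 0 < b) (x : ℝ) :
    a / 2 * (x / √(a * b)) ^ 2 = x ^ 2 / (2 * b) := by
  rw [div_pow, sq_sqrt (by positivity)]
  field_simp

lemma add_div_four_le_div_add_div {a b t : ℝ} (ha : 0 ≤ a) (hb : 0 ≤ b) (ht : |t| < 1) :
    (a + b) / 4 ≤ a / (2 * (1 + t)) + b / (2 * (1 - t)) := by
  obtain ⟨ht₁, ht₂⟩ := abs_lt.mp ht
  rw [add_div]
  gcongr <;> linarith

lemma div_add_div_le_add_div {a b t r : ℝ} (ha : 0 ≤ a) (hb : 0 ≤ b) (ht : |t| ≤ r) (hr : r < 1) :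
    a / (2 * (1 + t)) + b / (2 * (1 - t)) ≤ (a + b) / (2 * (1 - r)) := by
  obtain ⟨ht₁, ht₂⟩ := abs_le.mp ht
  rw [add_div]
  gcongr
  linarith

lemma norm_sq_ofReal_add_exp_mul (a b φ : ℝ) :
    ‖(a : ℂ) + Complex.exp (-(Complex.I * φ)) * b‖ ^ 2 = a ^ 2 + b ^ 2 + 2 * a * b * cos φ := by
  have h : -(Complex.I * φ) = ((-φ : ℝ) : ℂ) * Complex.I := by push_cast; ring
  rw [Complex.sq_norm, Complex.normSq_apply, h, Complex.exp_mul_I]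
  simp only [← Complex.ofReal_cos, ← Complex.ofReal_sin, Complex.add_re, Complex.add_im,
    Complex.mul_re, Complex.mul_im, Complex.ofReal_re, Complex.ofReal_im, Complex.I_re,
    Complex.I_im, cos_neg, sin_neg]
  nlinarith [sin_sq_add_cos_sq φ]

lemma norm_sq_ofReal_sub_exp_mul (a b φ : ℝ) :
    ‖(a : ℂ) - Complex.exp (-(Complex.I * φ)) * b‖ ^ 2 = a ^ 2 + b ^ 2 - 2 * a * b * cos φ := by
  have h := norm_sq_ofReal_add_exp_mul a (-b) φ
  push_cast at h
  rw [mul_neg, ← sub_eq_add_neg] at h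
  rw [h]
  ring

lemma max_norm_sq_ofReal_add_sub_exp_mul {a b : ℝ} (ha : 0 ≤ a) (hb : 0 ≤ b) (φ : ℝ) :
    max (‖(a : ℂ) + Complex.exp (-(Complex.I * φ)) * b‖ ^ 2)
        (‖(a : ℂ) - Complex.exp (-(Complex.I * φ)) * b‖ ^ 2) =
      a ^ 2 + b ^ 2 + 2 * a * b * |cos φ| := by
  have hab := mul_nonneg ha hb
  rw [norm_sq_ofReal_add_exp_mul, norm_sq_ofReal_sub_exp_mul]
  rcases abs_cases (cos φ) with ⟨h, hc⟩ | ⟨h, hc⟩ <;> rw [h]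
  · exact max_eq_left (by nlinarith)
  · rw [max_eq_right (by nlinarith)]
    ring

lemma abs_two_mul_sub_one_lt_one {x : ℝ} (hx : x ∈ Ioo 0 1) : |2 * x - 1| < 1 :=
  abs_sub_lt_iff.mpr ⟨by linarith [hx.2], by linarith [hx.1]⟩

lemma abs_cos_lt_one_of_mem_Ico {φ : ℝ} (hφ : φ ∈ Ico 0 (2 * π)) (h₀ : φ ≠ 0) (hπ : φ ≠ π) :
    |cos φ| < 1 := by
  refine (abs_cos_le_one φ).lt_of_ne fun h ↦ ?_
  obtain ⟨k, rfl⟩ := abs_cos_eq_one_iff.mp h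
  have hk₀ : (0 : ℝ) ≤ k := nonneg_of_mul_nonneg_left hφ.1 pi_pos
  have hk₂ : (k : ℝ) < 2 := lt_of_mul_lt_mul_right hφ.2 pi_pos.le
  have : k = 0 ∨ k = 1 := by
    have : 0 ≤ k := by exact_mod_cast hk₀
    have : k < 2 := by exact_mod_cast hk₂
    omega
  rcases this with rfl | rfl <;> simp_all

section Qubit

variable {p q : ℝ} (φ : ℝ)

lemma lamMax_sq : lamMax p q φ ^ 2 =
    √(p * q) ^ 2 + √((1 - p) * (1 - q)) ^ 2 + 2 * √(p * q) * √((1 - p) * (1 - q)) * |cos φ| :=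
  sq_sqrt (by positivity)

lemma lamMax_sq_pos (hp : 0 < p) (hq : 0 < q) : 0 < lamMax p q φ ^ 2 := by
  rw [lamMax_sq]
  have : 0 < √(p * q) := sqrt_pos.mpr (mul_pos hp hq)
  positivity

lemma lamMax_sq_lt_one (hp : p ∈ Ioo 0 1) (hq : q ∈ Ioo 0 1) (hφ : φ ∈ Ico 0 (2 * π))
    (h : p ≠ q ∨ (p = q ∧ φ ≠ 0 ∧ φ ≠ π)) : lamMax p q φ ^ 2 < 1 := by
  obtain ⟨hp₀, hp₁⟩ := hp
  obtain ⟨hq₀, hq₁⟩ := hq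
  set u := √(p * (1 - q))
  set v := √(q * (1 - p))
  have hu : u ^ 2 = p * (1 - q) := sq_sqrt (by nlinarith)
  have hv : v ^ 2 = q * (1 - p) := sq_sqrt (by nlinarith)
  have huv : √(p * q) * √((1 - p) * (1 - q)) = u * v := by
    rw [← sqrt_mul (by positivity), ← sqrt_mul (by nlinarith)]
    ring_nf
  have huv₀ : 0 < u * v := mul_pos (sqrt_pos.mpr (by nlinarith)) (sqrt_pos.mpr (by nlinarith))
  -- `λ_max² = 1 - (u - v)² - 2uv (1 - |cos φ|)`; the hypothesis makes one of these terms positive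
  have key : 2 * (u * v) * |cos φ| < u ^ 2 + v ^ 2 := by
    rcases h with hpq | ⟨rfl, h₀, hπ⟩
    · have hne : u ≠ v := fun he ↦ hpq (by nlinarith [congrArg (· ^ 2) he])
      have := sq_pos_of_ne_zero (sub_ne_zero.mpr hne)
      nlinarith [abs_cos_le_one φ]
    · nlinarith [abs_cos_lt_one_of_mem_Ico hφ h₀ hπ]
  rw [lamMax_sq, sq_sqrt (by positivity), sq_sqrt (by nlinarith), mul_assoc 2, huv]
  nlinarith

lemma typeIError_zero : typeIError p q φ 0 = 1 := by
  norm_num [typeIError, aSeq, bSeq]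

lemma typeIError_bounds (hp : p ∈ Ioo 0 1) (hq : q ∈ Ioo 0 1) (n : ℕ) :
    1 / 2 * (lamMax p q φ ^ 2) ^ n ≤ typeIError p q φ n ∧
      typeIError p q φ n ≤ 2 / (1 - |2 * q - 1|) * (lamMax p q φ ^ 2) ^ n := by
  have hr := abs_two_mul_sub_one_lt_one hq
  rcases n.eq_zero_or_pos with rfl | hn
  · rw [typeIError_zero, pow_zero, mul_one, mul_one, le_div_iff₀ (by linarith)]
    constructor <;> linarith [abs_nonneg (2 * q - 1)]
  set z : ℂ := √(p * q) + Complex.exp (-(Complex.I * φ)) * √((1 - p) * (1 - q))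
  set w : ℂ := √(p * q) - Complex.exp (-(Complex.I * φ)) * √((1 - p) * (1 - q))
  set K := lamMax p q φ ^ 2
  have hK : K = max (‖z‖ ^ 2) (‖w‖ ^ 2) :=
    (lamMax_sq φ).trans (max_norm_sq_ofReal_add_sub_exp_mul (sqrt_nonneg _) (sqrt_nonneg _) φ).symm
  have hP : |(2 * p - 1) ^ n| < 1 := by
    rw [abs_pow]
    exact pow_lt_one₀ (abs_nonneg _) (abs_two_mul_sub_one_lt_one hp) hn.ne'
  have hQ : |(2 * q - 1) ^ n| ≤ |2 * q - 1| := by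
    rw [abs_pow]
    exact pow_le_of_le_one (abs_nonneg _) hr.le hn.ne'
  have hQlt := hQ.trans_lt hr
  have hα : typeIError p q φ n =
      ‖z ^ n + w ^ n‖ ^ 2 / (2 * (1 + (2 * q - 1) ^ n)) +
        ‖z ^ n - w ^ n‖ ^ 2 / (2 * (1 - (2 * q - 1) ^ n)) := by
    rw [typeIError, aSeq, bSeq, half_mul_sq_div_sqrt_mul, half_mul_sq_div_sqrt_mul] <;>
      linarith [abs_lt.mp hP, abs_lt.mp hQlt]
  have hpar : ‖z ^ n + w ^ n‖ ^ 2 + ‖z ^ n - w ^ n‖ ^ 2 = 2 * ((‖z‖ ^ 2) ^ n + (‖w‖ ^ 2) ^ n) := by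
    rw [parallelogram_law_with_norm ℂ, norm_pow, norm_pow, ← pow_mul, ← pow_mul, pow_mul',
      pow_mul']
  have hlow := pow_max_le_add_pow (sq_nonneg ‖z‖) (sq_nonneg ‖w‖) n
  have hup := add_pow_le_two_mul_pow_max (sq_nonneg ‖z‖) (sq_nonneg ‖w‖) n
  rw [← hK] at hlow hup
  rw [hα]
  constructor
  · refine le_trans ?_ (add_div_four_le_div_add_div (sq_nonneg _) (sq_nonneg _) hQlt)
    linarith
  · refine (div_add_div_le_add_div (sq_nonneg _) (sq_nonneg _) hQ hr).trans ?_
    rw [hpar, div_mul_eq_mul_div, div_le_div_iff₀ (by linarith) (by linarith)]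
    nlinarith

end Qubit

/-- If p ≠ q, or p = q and φ ∉ {0, π}, then the critical number of
copies satisfies n_ε / log_{λ_max²}(ε) → 1 as ε → 0⁺, i.e.
n_ε = log_{λ_max²}(ε) + o(log_{λ_max²}(ε)). -/
theorem critical_copies_asymptotics (p q φ : ℝ) (hp : p ∈ Set.Ioo (0 : ℝ) 1)
    (hq : q ∈ Set.Ioo (0 : ℝ) 1) (hφ : φ ∈ Set.Ico (0 : ℝ) (2 * Real.pi))
    (h : p ≠ q ∨ (p = q ∧ φ ≠ 0 ∧ φ ≠ Real.pi)) :
    Filter.Tendsto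
      (fun ε : ℝ => (nCrit p q φ ε : ℝ) / (Real.log ε / Real.log (lamMax p q φ ^ 2)))
      (nhdsWithin 0 (Set.Ioi 0)) (nhds 1) := by
  have hr : 0 < 1 - |2 * q - 1| := sub_pos.mpr (abs_two_mul_sub_one_lt_one hq)
  exact tendsto_criticalIndex_div_logb (lamMax_sq_pos φ hp.1 hq.1) (lamMax_sq_lt_one φ hp hq hφ h)
    (fun n ↦ (typeIError_bounds φ hp hq n).1) (fun n ↦ (typeIError_bounds φ hp hq n).2)
    one_half_pos (div_pos two_pos hr)
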